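/- Let L be an n×n real symmetric matrix with n ≥ 2, let α ≥ 0, ζ > 0, and S ⊆ {1, …, n}, and suppose the matrix M = L + α·D(S) + ζI is positive definite. If log det(M) − (n−1)·log(trace(M)) > log ζ − (n−1)·log(n−1), then λ_min(M) > ζ, and consequently L + α·D(S) is positive definite. -/

import Mathlib

/-!
Let `λ₁` be the least eigenvalue of `M`. Then `det M = λ₁ ∏_{i ≠ 1} λᵢ`, and AM-GM on the other
`n - 1` eigenvalues, whose sum is at most `trace M`, gives
`det M ≤ λ₁ (trace M / (n - 1))^(n - 1)`. The logarithmic hypothesis says exactly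
`ζ (trace M / (n - 1))^(n - 1) < det M`, hence `ζ < λ₁`, and then every eigenvalue of
`L + α D(S) = M - ζ I` is positive.
-/

open Matrix Finset
open scoped ComplexOrder Pointwise

theorem Finset.prod_le_sum_div_card_pow {ι : Type*} (s : Finset ι) {z : ι → ℝ}
    (hz : ∀ i ∈ s, 0 ≤ z i) : ∏ i ∈ s, z i ≤ ((∑ i ∈ s, z i) / #s) ^ #s := by
  rcases s.eq_empty_or_nonempty with rfl | hs
  · simp
  have hcard : (0 : ℝ) < #s := by exact_mod_cast hs.card_pos
  have hgm := Real.geom_mean_le_arith_mean_weighted s (fun _ => (#s : ℝ)⁻¹) z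
    (fun _ _ => by positivity) (by simp [hcard.ne']) hz
  rw [Real.finsetProd_rpow s z hz, ← Finset.mul_sum, inv_mul_eq_div] at hgm
  calc ∏ i ∈ s, z i = ((∏ i ∈ s, z i) ^ (#s : ℝ)⁻¹) ^ #s :=
        (Real.rpow_inv_natCast_pow (prod_nonneg hz) hs.card_pos.ne').symm
    _ ≤ ((∑ i ∈ s, z i) / #s) ^ #s :=
        pow_le_pow_left₀ (Real.rpow_nonneg (prod_nonneg hz) _) hgm _

theorem Finset.prod_le_mul_sum_div_card_sub_one_pow {ι : Type*} [Fintype ι] [DecidableEq ι]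
    {z : ι → ℝ} (hz : ∀ i, 0 ≤ z i) (j : ι) :
    ∏ i, z i ≤ z j * ((∑ i, z i) / (Fintype.card ι - 1 : ℕ)) ^ (Fintype.card ι - 1) := by
  have hcard : #(univ.erase j) = Fintype.card ι - 1 := by
    rw [card_erase_of_mem (mem_univ j), card_univ]
  have hsum : ∑ i ∈ univ.erase j, z i ≤ ∑ i, z i := by
    rw [← add_sum_erase _ _ (mem_univ j)]
    linarith [hz j]
  rw [← mul_prod_erase _ _ (mem_univ j), ← hcard]
  refine mul_le_mul_of_nonneg_left
    (((univ.erase j).prod_le_sum_div_card_pow fun i _ => hz i).trans ?_) (hz j)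
  have hsum_nonneg : 0 ≤ ∑ i ∈ univ.erase j, z i := sum_nonneg fun i _ => hz i
  gcongr

theorem Matrix.PosSemidef.det_le_iInf_eigenvalues_mul {n : Type*} [Fintype n] [DecidableEq n]
    [Nonempty n] {A : Matrix n n ℝ} (hA : A.PosSemidef) :
    A.det ≤ (⨅ i, hA.1.eigenvalues i) *
      (A.trace / (Fintype.card n - 1 : ℕ)) ^ (Fintype.card n - 1) := by
  obtain ⟨j, hj⟩ := Finite.exists_min hA.1.eigenvalues
  have hmin : (⨅ i, hA.1.eigenvalues i) = hA.1.eigenvalues j :=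
    le_antisymm (ciInf_le (Finite.bddBelow_range _) j) (le_ciInf hj)
  rw [hmin, hA.1.det_eq_prod_eigenvalues, hA.1.trace_eq_sum_eigenvalues]
  exact prod_le_mul_sum_div_card_sub_one_pow hA.eigenvalues_nonneg j

theorem Matrix.IsHermitian.posDef_sub_smul_one {𝕜 n : Type*} [RCLike 𝕜] [Fintype n]
    [DecidableEq n] {A : Matrix n n 𝕜} (hA : A.IsHermitian) {c : ℝ}
    (hc : ∀ i, c < hA.eigenvalues i) : (A - c • (1 : Matrix n n 𝕜)).PosDef := by
  have hB : (A - c • (1 : Matrix n n 𝕜)).IsHermitian :=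
    hA.sub (isHermitian_one.smul (IsSelfAdjoint.all c))
  refine hB.posDef_iff_eigenvalues_pos.mpr fun i => ?_
  have hmem : hB.eigenvalues i ∈ spectrum ℝ A - ({c} : Set ℝ) := by
    rw [spectrum.sub_singleton_eq, Algebra.algebraMap_eq_smul_one]
    exact hB.eigenvalues_mem_spectrum_real i
  rw [hA.spectrum_real_eq_range_eigenvalues] at hmem
  obtain ⟨_, ⟨k, rfl⟩, _, rfl, hk⟩ := hmem
  rw [← hk]
  exact sub_pos.mpr (hc k)

theorem mul_div_pow_lt_of_log_sub_lt {d t ζ : ℝ} (hd : 0 < d) (ht : 0 < t) (hζ : 0 < ζ)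
    {m : ℕ} (hm : 0 < m)
    (h : Real.log ζ - m * Real.log m < Real.log d - m * Real.log t) :
    ζ * (t / m) ^ m < d := by
  have hmR : (0 : ℝ) < m := by exact_mod_cast hm
  rw [← Real.log_lt_log_iff (by positivity) hd, Real.log_mul hζ.ne' (by positivity),
    Real.log_pow, Real.log_div ht.ne' hmR.ne']
  linarith

theorem posDef_of_logDet_condition_general
    (n : ℕ) (hn : 2 ≤ n)
    (L : Matrix (Fin n) (Fin n) ℝ)
    (α ζ : ℝ) (hζ : 0 < ζ)
    (S : Finset (Fin n))
    (M : Matrix (Fin n) (Fin n) ℝ)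
    (hM : M = L + α • Matrix.diagonal (fun i => if i ∈ S then (1 : ℝ) else 0) + ζ • 1)
    (hMpd : M.PosDef)
    (hcond : Real.log M.det - ((n - 1 : ℕ) : ℝ) * Real.log M.trace >
      Real.log ζ - ((n - 1 : ℕ) : ℝ) * Real.log ((n - 1 : ℕ) : ℝ)) :
    ζ < (⨅ i, hMpd.1.eigenvalues i) ∧
      (L + α • Matrix.diagonal (fun i => if i ∈ S then (1 : ℝ) else 0)).PosDef := by
  have : Nonempty (Fin n) := ⟨⟨0, by omega⟩⟩
  have hupper := hMpd.posSemidef.det_le_iInf_eigenvalues_mul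
  rw [Fintype.card_fin] at hupper
  have hlower := mul_div_pow_lt_of_log_sub_lt hMpd.det_pos hMpd.trace_pos hζ (by omega) hcond
  have hmin : ζ < ⨅ i, hMpd.1.eigenvalues i :=
    lt_of_mul_lt_mul_right (hlower.trans_le hupper) (by have := hMpd.trace_pos; positivity)
  refine ⟨hmin, ?_⟩
  have hshift : L + α • Matrix.diagonal (fun i => if i ∈ S then (1 : ℝ) else 0) = M - ζ • 1 := by
    rw [hM]; abel
  rw [hshift]
  exact hMpd.1.posDef_sub_smul_one fun i =>
    hmin.trans_le (ciInf_le (Finite.bddBelow_range _) i)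

/-- Let `L` be an `n × n` real symmetric matrix with `n ≥ 2`, `α ≥ 0`, `ζ > 0`,
`S ⊆ {1, …, n}`, and suppose `M = L + α D(S) + ζ I` is positive definite. If
`log det(M) - (n-1) log(trace(M)) > log ζ - (n-1) log(n-1)`, then `λ_min(M) > ζ`, and
consequently `L + α D(S)` is positive definite. -/
theorem posDef_of_logDet_condition
    (n : ℕ) (hn : 2 ≤ n)
    (L : Matrix (Fin n) (Fin n) ℝ) (hL : L.IsSymm)
    (α ζ : ℝ) (hα : 0 ≤ α) (hζ : 0 < ζ)
    (S : Finset (Fin n))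
    (M : Matrix (Fin n) (Fin n) ℝ)
    (hM : M = L + α • Matrix.diagonal (fun i => if i ∈ S then (1 : ℝ) else 0) + ζ • 1)
    (hMpd : M.PosDef)
    (hcond : Real.log M.det - ((n - 1 : ℕ) : ℝ) * Real.log M.trace >
      Real.log ζ - ((n - 1 : ℕ) : ℝ) * Real.log ((n - 1 : ℕ) : ℝ)) :
    ζ < (⨅ i, hMpd.1.eigenvalues i) ∧
      (L + α • Matrix.diagonal (fun i => if i ∈ S then (1 : ℝ) else 0)).PosDef :=
  posDef_of_logDet_condition_general n hn L α ζ hζ S M hM hMpd hcond
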